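/- arXiv:1404.5493 — 4 statements merged into one kernel-verified Lean document; each statement's English description precedes it below -/
import Mathlib

section
/- Let 0 < ρ < 1, let I be a compact interval, and let A ⊆ I be a measurable subset with |A| ≥ ρ|I|. Then there is a constant c depending only on ρ and k such that for every polynomial Q of degree at most k−1, sup_{t∈I} |Q(t)| ≤ c · sup_{t∈A} |Q(t)|. -/
/-
A set of measure at least ρ|I| cannot be covered by k - 1 intervals of length ρ|I|/k, so it
contains k points at mutual distance at least δ = ρ|I|/(2k). Interpolating Q at these points,
each Lagrange basis polynomial is a product of k - 1 factors (t - x_j)/(x_i - x_j) of size at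
most |I|/δ = 2k/ρ on I, whence sup_I |Q| ≤ k (2k/ρ)^(k-1) sup_A |Q|.
-/

open MeasureTheory Set Metric Polynomial

open scoped ENNReal

theorem exists_finset_subset_card_eq_pairwise_lt_dist {X : Type*} [PseudoMetricSpace X]
    [MeasurableSpace X] (μ : Measure X) {A : Set X} {δ : ℝ} (hδ : 0 ≤ δ) {V : ℝ≥0∞}
    (hV : ∀ x, μ (closedBall x δ) ≤ V) :
    ∀ n : ℕ, n * V < μ A →
      ∃ S : Finset X, ↑S ⊆ A ∧ S.card = n + 1 ∧ (S : Set X).Pairwise fun x y => δ < dist x y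
  | 0, hA => by
    obtain ⟨x, hx⟩ := nonempty_of_measure_ne_zero (by simpa using hA.ne')
    exact ⟨{x}, by simpa using hx, rfl, by simp⟩
  | n + 1, hA => by
    classical
    obtain ⟨S, hSA, hcard, hsep⟩ := exists_finset_subset_card_eq_pairwise_lt_dist μ hδ hV n
      (lt_of_le_of_lt (by gcongr; simp) hA)
    have hcover : μ (⋃ s ∈ S, closedBall s δ) < μ A :=
      calc μ (⋃ s ∈ S, closedBall s δ) ≤ ∑ s ∈ S, μ (closedBall s δ) :=
            measure_biUnion_finset_le _ _
        _ ≤ ∑ _s ∈ S, V := Finset.sum_le_sum fun s _ => hV s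
        _ = (n + 1 : ℕ) * V := by rw [Finset.sum_const, hcard, nsmul_eq_mul]
        _ < μ A := by exact_mod_cast hA
    obtain ⟨x, hxA, hxU⟩ : (A \ ⋃ s ∈ S, closedBall s δ).Nonempty :=
      sdiff_nonempty.mpr fun h => (measure_mono h).not_gt hcover
    have hfar : ∀ s ∈ S, δ < dist x s := fun s hs =>
      not_le.mp fun h => hxU (mem_iUnion₂.mpr ⟨s, hs, h⟩)
    have hxS : x ∉ S := fun hx => (hfar x hx).not_ge (by simpa using hδ)
    refine ⟨insert x S, ?_, by rw [Finset.card_insert_of_notMem hxS, hcard], ?_⟩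
    · rw [Finset.coe_insert, insert_subset_iff]
      exact ⟨hxA, hSA⟩
    · rw [Finset.coe_insert]
      exact hsep.insert fun s hs _ => ⟨hfar s hs, dist_comm x s ▸ hfar s hs⟩

theorem abs_eval_basis_le {S : Finset ℝ} {δ D t : ℝ} (hδ : 0 < δ)
    (hsep : (S : Set ℝ).Pairwise fun x y => δ ≤ dist x y) (hD : ∀ s ∈ S, dist t s ≤ D)
    {i : ℝ} (hi : i ∈ S) : |(Lagrange.basis S id i).eval t| ≤ (D / δ) ^ (S.card - 1) := by
  rw [Lagrange.basis, eval_prod, Finset.abs_prod, ← Finset.card_erase_of_mem hi,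
    ← Finset.prod_const]
  refine Finset.prod_le_prod (fun _ _ => abs_nonneg _) fun j hj => ?_
  obtain ⟨hji, hj⟩ := Finset.mem_erase.mp hj
  have hij : δ ≤ |i - j| := hsep hi hj (Ne.symm hji)
  calc |(Lagrange.basisDivisor i j).eval t| = |t - j| / |i - j| := by
        simp [Lagrange.basisDivisor, abs_mul, div_eq_inv_mul]
    _ ≤ D / δ := div_le_div₀ (dist_nonneg.trans (hD j hj)) (hD j hj) hδ hij

theorem abs_eval_le_of_pairwise_le_dist {S : Finset ℝ} {δ D M t : ℝ} (hδ : 0 < δ)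
    (hsep : (S : Set ℝ).Pairwise fun x y => δ ≤ dist x y) (hD : ∀ s ∈ S, dist t s ≤ D)
    {Q : ℝ[X]} (hQ : Q.natDegree < S.card) (hM : ∀ s ∈ S, |Q.eval s| ≤ M) :
    |Q.eval t| ≤ S.card * (D / δ) ^ (S.card - 1) * M := by
  have hinterp : Q.eval t = ∑ i ∈ S, Q.eval i * (Lagrange.basis S id i).eval t := by
    have hdeg : Q.degree < S.card := Q.degree_le_natDegree.trans_lt (by exact_mod_cast hQ)
    conv_lhs => rw [Lagrange.eq_interpolate (v := id) (injOn_id _) hdeg]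
    simp [Lagrange.interpolate_apply, eval_finsetSum]
  calc |Q.eval t| ≤ ∑ i ∈ S, |Q.eval i| * |(Lagrange.basis S id i).eval t| := by
        rw [hinterp]
        exact (Finset.abs_sum_le_sum_abs _ _).trans_eq (by simp only [abs_mul])
    _ ≤ ∑ _i ∈ S, M * (D / δ) ^ (S.card - 1) := Finset.sum_le_sum fun i hi =>
        mul_le_mul (hM i hi) (abs_eval_basis_le hδ hsep hD hi) (abs_nonneg _)
          ((abs_nonneg _).trans (hM i hi))
    _ = S.card * (D / δ) ^ (S.card - 1) * M := by rw [Finset.sum_const, nsmul_eq_mul]; ring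

theorem natCast_sub_one_mul_ofReal_div_lt {L : ℝ} (hL : 0 < L) {k : ℕ} (hk : 1 ≤ k) :
    ((k - 1 : ℕ) : ℝ≥0∞) * ENNReal.ofReal (L / k) < ENNReal.ofReal L := by
  have hk0 : (0 : ℝ) < k := by exact_mod_cast hk
  rw [← ENNReal.ofReal_natCast, ← ENNReal.ofReal_mul (Nat.cast_nonneg _),
    ENNReal.ofReal_lt_ofReal_iff hL, Nat.cast_sub hk, Nat.cast_one, mul_div_assoc',
    div_lt_iff₀ hk0]
  linarith

theorem polynomial_sup_bound_general (ρ : ℝ) (hρ0 : 0 < ρ) (k : ℕ) (hk : 1 ≤ k) :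
    ∃ c : ℝ, 0 < c ∧
      ∀ (a b : ℝ), a < b → ∀ A : Set ℝ, A ⊆ Set.Icc a b → MeasurableSet A →
        ρ * (volume (Set.Icc a b)).toReal ≤ (volume A).toReal →
        ∀ Q : Polynomial ℝ, Q.natDegree < k →
          ∀ t ∈ Set.Icc a b, |Q.eval t| ≤ c * sSup ((fun s => |Q.eval s|) '' A) := by
  refine ⟨k * (2 * k / ρ) ^ (k - 1), by positivity, ?_⟩
  intro a b hab A hA _ hvol Q hQ t ht
  have hba : 0 < b - a := sub_pos.mpr hab
  set δ := ρ * (b - a) / (2 * k)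
  have hδ : 0 < δ := by positivity
  have hball : ∀ x, volume (closedBall x δ) = ENNReal.ofReal (ρ * (b - a) / k) := fun x => by
    rw [Real.volume_closedBall]; congr 1; simp only [δ]; field_simp
  have hpack : ((k - 1 : ℕ) : ℝ≥0∞) * ENNReal.ofReal (ρ * (b - a) / k) < volume A :=
    (natCast_sub_one_mul_ofReal_div_lt (by positivity) hk).trans_le
      (ENNReal.ofReal_le_of_le_toReal (by simpa [Real.volume_Icc, hab.le] using hvol))
  obtain ⟨S, hSA, hcard, hsep⟩ := exists_finset_subset_card_eq_pairwise_lt_dist volume hδ.le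
    (fun x => (hball x).le) (k - 1) hpack
  rw [Nat.sub_add_cancel hk] at hcard
  have hbdd : BddAbove ((fun s => |Q.eval s|) '' A) :=
    (isCompact_Icc.image Q.continuous.abs).bddAbove.mono (image_mono hA)
  have hQt := abs_eval_le_of_pairwise_le_dist hδ (hsep.mono' fun _ _ => le_of_lt)
    (fun s hs => Real.dist_le_of_mem_Icc ht (hA (hSA hs))) (hcard ▸ hQ)
    fun s hs => le_csSup hbdd (mem_image_of_mem _ (hSA hs))
  rwa [hcard, show (b - a) / δ = 2 * k / ρ by simp only [δ]; field_simp] at hQt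

/-- Remez-type inequality: if `A ⊆ I` has measure at least `ρ|I|`, then for every
polynomial `Q` of degree at most `k-1`, `sup_I |Q| ≤ c(ρ,k) · sup_A |Q|`. -/
theorem polynomial_sup_bound (ρ : ℝ) (hρ0 : 0 < ρ) (hρ1 : ρ < 1) (k : ℕ) (hk : 1 ≤ k) :
    ∃ c : ℝ, 0 < c ∧
      ∀ (a b : ℝ), a < b → ∀ A : Set ℝ, A ⊆ Set.Icc a b → MeasurableSet A →
        ρ * (volume (Set.Icc a b)).toReal ≤ (volume A).toReal →
        ∀ Q : Polynomial ℝ, Q.natDegree < k →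
          ∀ t ∈ Set.Icc a b, |Q.eval t| ≤ c * sSup ((fun s => |Q.eval s|) '' A) :=
  polynomial_sup_bound_general ρ hρ0 k hk
end

section
/- Let 0 < ρ < 1, let I be a compact interval, and let A ⊆ I be measurable with |A| ≥ ρ|I|. Then there is a constant c depending only on ρ and k such that for every polynomial Q of degree at most k−1, ∫_I |Q(t)| dt ≤ c · ∫_A |Q(t)| dt. -/
/-!
Factor `Q` over `ℂ`. Discarding from `A` the `δ`-neighbourhoods of the real parts of the at most
`k - 1` roots, with `δ = ρ|I|/(4k)`, leaves a set `G ⊆ A` with `|G| ≥ ρ|I|/2`. A point `t₀ ∈ G` is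
at distance at least `δ` from every root `z`, so for `t ∈ I` each factor satisfies
`|t - z| ≤ (1 + |I|/δ) |t₀ - z|`, whence `|Q(t)| ≤ C |Q(t₀)|` with `C = (1 + 4k/ρ)^k`. Averaging
over `t ∈ I` and `t₀ ∈ G` gives `|G| ∫_I |Q| ≤ C |I| ∫_G |Q|`.
-/

open MeasureTheory Set Polynomial Metric

theorem norm_eval_le_pow_card_roots_mul {K : Type*} [NormedField K] {p : K[X]} (hp : p.Splits)
    {x y : K} {C : ℝ} (h : ∀ z ∈ p.roots, ‖x - z‖ ≤ C * ‖y - z‖) :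
    ‖p.eval x‖ ≤ C ^ Multiset.card p.roots * ‖p.eval y‖ := by
  have hnorm (w : K) : ‖(p.roots.map (w - ·)).prod‖ = (p.roots.map fun z => ‖w - z‖).prod := by
    simpa [Multiset.map_map] using map_multiset_prod (normHom : K →*₀ ℝ) (p.roots.map (w - ·))
  rw [hp.eval_eq_prod_roots, hp.eval_eq_prod_roots, norm_mul, norm_mul, hnorm, hnorm]
  calc ‖p.leadingCoeff‖ * (p.roots.map fun z => ‖x - z‖).prod
      ≤ ‖p.leadingCoeff‖ * (p.roots.map fun z => C * ‖y - z‖).prod := by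
        gcongr
        exact Multiset.prod_map_le_prod_map₀ _ _ (fun z _ => norm_nonneg _) h
    _ = C ^ Multiset.card p.roots * (‖p.leadingCoeff‖ * (p.roots.map fun z => ‖y - z‖).prod) := by
        rw [Multiset.prod_map_mul, Multiset.map_const', Multiset.prod_replicate]; ring

theorem norm_sub_le_one_add_div_mul {E : Type*} [SeminormedAddCommGroup E] {x y z : E} {δ : ℝ}
    (hδ : 0 < δ) (hy : δ ≤ ‖y - z‖) : ‖x - z‖ ≤ (1 + ‖x - y‖ / δ) * ‖y - z‖ := by
  have : ‖x - y‖ ≤ ‖x - y‖ / δ * ‖y - z‖ :=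
    calc ‖x - y‖ = ‖x - y‖ / δ * δ := (div_mul_cancel₀ _ hδ.ne').symm
      _ ≤ ‖x - y‖ / δ * ‖y - z‖ := by gcongr
  calc ‖x - z‖ ≤ ‖x - y‖ + ‖y - z‖ := norm_sub_le_norm_sub_add_norm_sub _ _ _
    _ ≤ _ := by linarith

noncomputable def rootRealParts (Q : ℝ[X]) : Finset ℝ :=
  ((Q.map (algebraMap ℝ ℂ)).roots.map Complex.re).toFinset

theorem card_rootRealParts_le (Q : ℝ[X]) : (rootRealParts Q).card ≤ Q.natDegree :=
  (Multiset.toFinset_card_le _).trans (by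
    simpa [natDegree_map] using card_roots' (Q.map (algebraMap ℝ ℂ)))

theorem abs_eval_le_pow_mul_abs_eval (Q : ℝ[X]) {δ : ℝ} (hδ : 0 < δ) (t : ℝ) {t₀ : ℝ}
    (ht₀ : t₀ ∉ ⋃ x ∈ rootRealParts Q, closedBall x δ) :
    |Q.eval t| ≤ (1 + |t - t₀| / δ) ^ Q.natDegree * |Q.eval t₀| := by
  set p := Q.map (algebraMap ℝ ℂ)
  have habs (s : ℝ) : |Q.eval s| = ‖p.eval (s : ℂ)‖ := by
    rw [eval_map_algebraMap, ← Complex.coe_algebraMap, aeval_algebraMap_apply_eq_algebraMap_eval,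
      Complex.coe_algebraMap, Complex.norm_real, Real.norm_eq_abs]
  have hfactor : ∀ z ∈ p.roots, ‖(t : ℂ) - z‖ ≤ (1 + |t - t₀| / δ) * ‖(t₀ : ℂ) - z‖ := by
    intro z hz
    have hfar : δ ≤ ‖(t₀ : ℂ) - z‖ := by
      have : z.re ∈ rootRealParts Q := Multiset.mem_toFinset.2 (Multiset.mem_map_of_mem _ hz)
      simp only [mem_iUnion, mem_closedBall, not_exists, not_le] at ht₀
      calc δ ≤ |((t₀ : ℂ) - z).re| := by simpa [Real.dist_eq] using (ht₀ z.re this).le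
        _ ≤ _ := Complex.abs_re_le_norm _
    simpa [← Complex.ofReal_sub, Complex.norm_real] using
      norm_sub_le_one_add_div_mul (x := (t : ℂ)) hδ hfar
  have hbase : 1 ≤ 1 + |t - t₀| / δ := le_add_of_nonneg_right (by positivity)
  rw [habs, habs]
  calc ‖p.eval (t : ℂ)‖ ≤ (1 + |t - t₀| / δ) ^ Multiset.card p.roots * ‖p.eval (t₀ : ℂ)‖ :=
        norm_eval_le_pow_card_roots_mul (IsAlgClosed.splits p) hfactor
    _ ≤ _ := by
        gcongr
        simpa [p, natDegree_map] using card_roots' p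

theorem abs_eval_le_of_mem_Icc {Q : ℝ[X]} {k : ℕ} (hQ : Q.natDegree ≤ k) {δ : ℝ} (hδ : 0 < δ)
    {a b t t₀ : ℝ} (ht : t ∈ Icc a b) (ht₀ : t₀ ∈ Icc a b)
    (hfar : t₀ ∉ ⋃ x ∈ rootRealParts Q, closedBall x δ) :
    |Q.eval t| ≤ (1 + (b - a) / δ) ^ k * |Q.eval t₀| := by
  have hdist : |t - t₀| ≤ b - a := by simpa [← Real.dist_eq] using Real.dist_le_of_mem_Icc ht ht₀
  have hbase : 1 ≤ 1 + |t - t₀| / δ := le_add_of_nonneg_right (by positivity)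
  calc |Q.eval t| ≤ (1 + |t - t₀| / δ) ^ Q.natDegree * |Q.eval t₀| :=
        abs_eval_le_pow_mul_abs_eval Q hδ t hfar
    _ ≤ (1 + |t - t₀| / δ) ^ k * |Q.eval t₀| := by gcongr
    _ ≤ (1 + (b - a) / δ) ^ k * |Q.eval t₀| := by gcongr

theorem le_measureReal_sdiff_biUnion_closedBall (A : Set ℝ) (s : Finset ℝ) {δ : ℝ} (hδ : 0 ≤ δ) :
    volume.real A - s.card * (2 * δ) ≤ volume.real (A \ ⋃ x ∈ s, closedBall x δ) := by
  have hfin : volume (⋃ x ∈ s, closedBall x δ) ≠ ⊤ :=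
    (measure_biUnion_lt_top s.finite_toSet fun _ _ => measure_closedBall_lt_top).ne
  have hunion : volume.real (⋃ x ∈ s, closedBall x δ) ≤ s.card * (2 * δ) :=
    calc volume.real (⋃ x ∈ s, closedBall x δ) ≤ ∑ x ∈ s, volume.real (closedBall x δ) :=
          measureReal_biUnion_finset_le _ _
      _ = s.card * (2 * δ) := by simp [hδ]
  linarith [le_measureReal_sdiff (μ := volume) (s₁ := A) hfin]

theorem measureReal_mul_setIntegral_le {α : Type*} [MeasurableSpace α] {μ : Measure α}
    {f : α → ℝ} {s t u : Set α} {M : ℝ} (hs : MeasurableSet s) (ht : MeasurableSet t)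
    (htu : t ⊆ u) (hμs : μ s ≠ ⊤) (hμt : μ t ≠ ⊤) (hfs : IntegrableOn f s μ)
    (hfu : IntegrableOn f u μ) (hf : 0 ≤ᵐ[μ.restrict u] f) (hM : 0 ≤ M)
    (h : ∀ x ∈ s, ∀ y ∈ t, f x ≤ M * f y) :
    μ.real t * ∫ x in s, f x ∂μ ≤ μ.real s * M * ∫ y in u, f y ∂μ := by
  have hpt : ∀ y ∈ t, ∫ x in s, f x ∂μ ≤ μ.real s * M * f y := fun y hy =>
    calc ∫ x in s, f x ∂μ ≤ ∫ _ in s, M * f y ∂μ :=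
          setIntegral_mono_on hfs (integrableOn_const hμs) hs fun x hx => h x hx y hy
      _ = μ.real s * M * f y := by rw [setIntegral_const, smul_eq_mul, mul_assoc]
  calc μ.real t * ∫ x in s, f x ∂μ = ∫ _ in t, ∫ x in s, f x ∂μ ∂μ := by
        rw [setIntegral_const, smul_eq_mul]
    _ ≤ ∫ y in t, μ.real s * M * f y ∂μ :=
        setIntegral_mono_on (integrableOn_const hμt) ((hfu.mono_set htu).const_mul _) ht hpt
    _ = μ.real s * M * ∫ y in t, f y ∂μ := integral_const_mul _ _
    _ ≤ μ.real s * M * ∫ y in u, f y ∂μ :=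
        mul_le_mul_of_nonneg_left (setIntegral_mono_set hfu hf htu.eventuallyLE) (by positivity)

theorem polynomial_integral_bound_general (ρ : ℝ) (hρ0 : 0 < ρ) (k : ℕ) :
    ∃ c : ℝ, 0 < c ∧
      ∀ (a b : ℝ), a < b → ∀ A : Set ℝ, A ⊆ Set.Icc a b → MeasurableSet A →
        ρ * (volume (Set.Icc a b)).toReal ≤ (volume A).toReal →
        ∀ Q : Polynomial ℝ, Q.natDegree < k →
          (∫ t in Set.Icc a b, |Q.eval t|) ≤ c * ∫ t in A, |Q.eval t| := by
  set C := 1 + 4 * k / ρ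
  refine ⟨2 * C ^ k / ρ, by positivity, fun a b hab A hAI hAm hAρ Q hQ => ?_⟩
  have hk : (0 : ℝ) < k := by exact_mod_cast (Nat.zero_le _).trans_lt hQ
  have hL : 0 < b - a := sub_pos.2 hab
  set δ := ρ * (b - a) / (4 * k)
  have hδ : 0 < δ := by positivity
  set G := A \ ⋃ x ∈ rootRealParts Q, closedBall x δ
  have hGI : G ⊆ Icc a b := sdiff_subset.trans hAI
  have hG : ρ * (b - a) / 2 ≤ volume.real G := by
    have hcard : ((rootRealParts Q).card : ℝ) ≤ k := by
      exact_mod_cast (card_rootRealParts_le Q).trans hQ.le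
    have hkδ : k * (2 * δ) = ρ * (b - a) / 2 := by simp only [δ]; field_simp; ring
    rw [← measureReal_def, ← measureReal_def, Real.volume_real_Icc_of_le hab.le] at hAρ
    nlinarith [le_measureReal_sdiff_biUnion_closedBall A (rootRealParts Q) hδ.le]
  have hpt : ∀ t ∈ Icc a b, ∀ t₀ ∈ G, |Q.eval t| ≤ C ^ k * |Q.eval t₀| := by
    rintro t ht t₀ ⟨ht₀A, ht₀far⟩
    have hLδ : (b - a) / δ = 4 * k / ρ := by simp only [δ]; field_simp
    simpa [hLδ] using abs_eval_le_of_mem_Icc hQ.le hδ ht (hAI ht₀A) ht₀far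
  have hint : IntegrableOn (fun t => |Q.eval t|) (Icc a b) := Q.continuous.abs.integrableOn_Icc
  have hJ : 0 ≤ ∫ t in Icc a b, |Q.eval t| :=
    setIntegral_nonneg measurableSet_Icc fun _ _ => abs_nonneg _
  have hGm : MeasurableSet G :=
    hAm.diff (Finset.measurableSet_biUnion _ fun _ _ => measurableSet_closedBall)
  have hcompare : volume.real G * ∫ t in Icc a b, |Q.eval t| ≤
      (b - a) * C ^ k * ∫ t in A, |Q.eval t| := by
    simpa only [Real.volume_real_Icc_of_le hab.le] using measureReal_mul_setIntegral_le
      measurableSet_Icc hGm sdiff_subset measure_Icc_lt_top.ne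
      (measure_ne_top_of_subset hGI measure_Icc_lt_top.ne) hint (hint.mono_set hAI) (.of_forall fun _ => abs_nonneg _) (by positivity) hpt
  rw [div_mul_eq_mul_div, le_div_iff₀ hρ0]
  refine le_of_mul_le_mul_left ?_ (half_pos hL)
  nlinarith [mul_le_mul_of_nonneg_right hG hJ]

/-- Remez-type inequality, integral form: if `A ⊆ I` has measure at least `ρ|I|`, then for
every polynomial `Q` of degree at most `k-1`, `∫_I |Q| ≤ c(ρ,k) · ∫_A |Q|`. -/
theorem polynomial_integral_bound (ρ : ℝ) (hρ0 : 0 < ρ) (hρ1 : ρ < 1) (k : ℕ) (hk : 1 ≤ k) :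
    ∃ c : ℝ, 0 < c ∧
      ∀ (a b : ℝ), a < b → ∀ A : Set ℝ, A ⊆ Set.Icc a b → MeasurableSet A →
        ρ * (volume (Set.Icc a b)).toReal ≤ (volume A).toReal →
        ∀ Q : Polynomial ℝ, Q.natDegree < k →
          (∫ t in Set.Icc a b, |Q.eval t|) ≤ c * ∫ t in A, |Q.eval t| :=
  polynomial_integral_bound_general ρ hρ0 k
end

section
/- Let (t_n) be a k-admissible knot sequence with associated characteristic intervals J_n (one knot interval per newly inserted point). For any two knots x < y occurring in the sequence, the number of indices n such that J_n ⊆ [x, y] and |J_n| ≥ |[x,y]|/2 is bounded by a constant F_k depending only on k. -/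
/-!
Let `L = y - x`. A counted characteristic interval `J_n` has length at least `L/2` and lies in
a B-spline support `[τ_j, τ_{j+k}]` around `t_n = τ_{i₀}` made of `k` knot intervals, none longer
than `J_n`; hence `t_n` lies within `kL` of `[x, y]`. Since that support is approximately
minimal (`j ∈ Λ⁰`), both `[τ_{i₀-k}, τ_{i₀}]` and `[τ_{i₀}, τ_{i₀+k}]` have length at least
`L/4`. Cut the `kL`-neighbourhood of `[x, y]` into `8k + 5` cells of length `L/4`: if `n` is the
largest counted index whose `t_n` falls in a given cell, every other `t_m` in that cell is a knot
of `𝒯_n` strictly between `τ_{i₀-k}` and `τ_{i₀+k}`, and there are at most `2k - 1` of those.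
-/

open MeasureTheory Set Filter

attribute [local instance] Classical.propDecidable

noncomputable section

/-- A `k`-admissible knot sequence on `[0,1]`: `t 0 = 0`, `t 1 = 1`, the points
`t n` for `n ≥ 2` are dense in the open unit interval and every value is attained
at most `k` times. -/
structure KnotSeq (k : ℕ) where
  t : ℕ → ℝ
  two_le : 2 ≤ k
  t0 : t 0 = 0
  t1 : t 1 = 1
  mem_Ioo : ∀ n, 2 ≤ n → t n ∈ Set.Ioo (0:ℝ) 1
  dense' : ∀ x ∈ Set.Icc (0:ℝ) 1, ∀ ε : ℝ, 0 < ε → ∃ n, 2 ≤ n ∧ |t n - x| < ε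
  mult_finite : ∀ x : ℝ, ({n | 2 ≤ n ∧ t n = x} : Set ℕ).Finite
  mult_le : ∀ x : ℝ, ({n | 2 ≤ n ∧ t n = x} : Set ℕ).ncard ≤ k

variable {k : ℕ}

/-- The sorted list of knots of the partition `𝒯_n`: the points `t 2, …, t n`
together with `0` and `1`, each with multiplicity `k`. -/
noncomputable def KnotSeq.plist (K : KnotSeq k) (n : ℕ) : List ℝ :=
  (List.replicate k (0:ℝ) ++ List.replicate k (1:ℝ) ++
    ((List.range (n-1)).map (fun j => K.t (j+2)))).mergeSort (fun a b => decide (a ≤ b))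

/-- `K.τ n i` is the `i`-th knot `τ_{n,i}` of the partition `𝒯_n` (1-indexed,
`1 ≤ i ≤ n + 2k - 1`). -/
noncomputable def KnotSeq.τ (K : KnotSeq k) (n i : ℕ) : ℝ := (K.plist n).getD (i-1) 0

/-- The length `|D_{n,i}^{(ℓ)}| = τ_{n,i+ℓ} - τ_{n,i}`. -/
noncomputable def KnotSeq.len (K : KnotSeq k) (n i ℓ : ℕ) : ℝ := K.τ n (i+ℓ) - K.τ n i

/-- `ℓ`-regularity with parameter `γ`: neighbouring spans of `ℓ+1` consecutive
knots have comparable lengths. -/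
def KnotSeq.Regular (K : KnotSeq k) (ℓ : ℕ) (γ : ℝ) : Prop :=
  ∀ n, 2 ≤ n → ∀ i, k - ℓ + 1 ≤ i → i ≤ n + k - 2 →
    K.len n i ℓ / γ ≤ K.len n (i+1) ℓ ∧ K.len n (i+1) ℓ ≤ γ * K.len n i ℓ

/-- Truncated power function `x ↦ (x-a)_+^d`. -/
def truncPow (a : ℝ) (d : ℕ) : ℝ → ℝ := fun x => (max (x - a) 0) ^ d

/-- Multiplicity of the knot `t j` among `t 2, …, t j`. -/
noncomputable def KnotSeq.multUpTo (K : KnotSeq k) (j : ℕ) : ℕ :=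
  ({i | 2 ≤ i ∧ i ≤ j ∧ K.t i = K.t j} : Set ℕ).ncard

/-- The space `𝒮_n^{(k)}` of splines of order `k` with knots `𝒯_n`, realized as the
span of polynomials of degree `< k` and appropriate truncated powers. -/
noncomputable def KnotSeq.splineSpace (K : KnotSeq k) (n : ℕ) : Submodule ℝ (ℝ → ℝ) :=
  Submodule.span ℝ
    ({f | ∃ d, d < k ∧ f = fun x : ℝ => x ^ d} ∪
     {f | ∃ j, 2 ≤ j ∧ j ≤ n ∧ f = truncPow (K.t j) (k - K.multUpTo j)})

/-- The increasing ladder of spaces, reindexed over `ℕ`: index `m` corresponds to the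
paper's index `n = m - k + 2`; for `m < k` we get polynomials of degree `≤ m`. -/
noncomputable def KnotSeq.sys (K : KnotSeq k) (m : ℕ) : Submodule ℝ (ℝ → ℝ) :=
  if m < k then Submodule.span ℝ {f | ∃ d, d ≤ m ∧ f = fun x : ℝ => x ^ d}
  else K.splineSpace (m - k + 2)

/-- `f` is the orthonormal spline system of order `k` associated with `K`
(reindexed so that the paper's `f_n` is `f (n + k - 2)`). -/
def KnotSeq.IsOSS (K : KnotSeq k) (f : ℕ → ℝ → ℝ) : Prop :=
  ∀ m, f m ∈ K.sys m ∧ (∫ x in (0:ℝ)..1, (f m x)^2) = 1 ∧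
    ∀ m', m' < m → ∀ g ∈ K.sys m', (∫ x in (0:ℝ)..1, f m x * g x) = 0

/-- The (last) position `i₀` of the newly inserted knot `t n` inside `𝒯_n`. -/
noncomputable def KnotSeq.i0 (K : KnotSeq k) (n : ℕ) : ℕ :=
  k + ({j | 2 ≤ j ∧ j ≤ n ∧ K.t j < K.t n} : Set ℕ).ncard
    + ({j | 2 ≤ j ∧ j ≤ n ∧ K.t j = K.t n} : Set ℕ).ncard

/-- `|α_j|`, the absolute value of the coefficient from formula (3.2) of the paper. -/
noncomputable def KnotSeq.absα (K : KnotSeq k) (n j : ℕ) : ℝ :=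
  (∏ l ∈ Finset.Ico (K.i0 n - k + 1) j,
      (K.τ n (K.i0 n) - K.τ n l) / (K.τ n (l+k) - K.τ n l)) *
  (∏ l ∈ Finset.Ico (j+1) (K.i0 n),
      (K.τ n (l+k) - K.τ n (K.i0 n)) / (K.τ n (l+k) - K.τ n l))

/-- `Λ⁰`: indices whose B-spline support is approximately minimal. -/
noncomputable def KnotSeq.Λ0 (K : KnotSeq k) (n : ℕ) : Finset ℕ :=
  (Finset.Icc (K.i0 n - k) (K.i0 n)).filter (fun j =>
    ∀ l ∈ Finset.Icc (K.i0 n - k) (K.i0 n), K.len n j k ≤ 2 * K.len n l k)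

/-- `Λ¹`: indices of `Λ⁰` with maximal `|α_j|`. -/
noncomputable def KnotSeq.Λ1 (K : KnotSeq k) (n : ℕ) : Finset ℕ :=
  (K.Λ0 n).filter (fun j => ∀ l ∈ K.Λ0 n, K.absα n l ≤ K.absα n j)

/-- `J` is a characteristic interval for the pair `(𝒯_n, 𝒯_{n-1})`: a knot interval
of maximal length inside the support `[τ_{j⁰}, τ_{j⁰+k}]` for some `j⁰ ∈ Λ¹`. -/
def KnotSeq.IsCharInterval (K : KnotSeq k) (n : ℕ) (J : Set ℝ) : Prop :=
  ∃ j0 ∈ K.Λ1 n, ∃ l, l < k ∧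
    J = Set.Icc (K.τ n (j0+l)) (K.τ n (j0+l+1)) ∧
    ∀ l' < k, K.len n (j0+l') 1 ≤ K.len n (j0+l) 1

/-- `d_n`-type count: the number of knots of `𝒯_n` (with multiplicity) lying
between the sets `A` and `B` (including endpoints of both). -/
noncomputable def KnotSeq.dcount (K : KnotSeq k) (n : ℕ) (A B : Set ℝ) : ℕ :=
  ((Finset.Icc 1 (n+2*k-1)).filter (fun i =>
    K.τ n i ∈ Set.Icc (min (sSup A) (sSup B)) (max (sInf A) (sInf B)))).card

/-- Distance between two (closed bounded) intervals. -/
noncomputable def setDist (A B : Set ℝ) : ℝ := max (max (sInf B - sSup A) (sInf A - sSup B)) 0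

/-- Cox–de Boor B-splines of order `m` (degree `m-1`) on the knots `τ`. -/
noncomputable def Bspline (τ : ℕ → ℝ) : ℕ → ℕ → ℝ → ℝ
  | _, 0, _ => 0
  | i, 1, x => if τ i ≤ x ∧ x < τ (i+1) then (1:ℝ) else 0
  | i, (m+2), x =>
      (if τ (i+m+1) = τ i then 0 else (x - τ i) / (τ (i+m+1) - τ i)) * Bspline τ i (m+1) x
    + (if τ (i+m+2) = τ (i+1) then 0 else (τ (i+m+2) - x) / (τ (i+m+2) - τ (i+1))) *
        Bspline τ (i+1) (m+1) x

/-- An `H¹[0,1]`-atom. -/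
def IsAtom1 (a : ℝ → ℝ) : Prop :=
  Measurable a ∧
  ((∀ x ∈ Set.Icc (0:ℝ) 1, a x = 1) ∨
   ∃ α β : ℝ, 0 ≤ α ∧ α < β ∧ β ≤ 1 ∧
     (∀ x, x ∉ Set.Icc α β → a x = 0) ∧
     (∀ x, |a x| ≤ (β - α)⁻¹) ∧
     (∫ x in α..β, a x) = 0)

/-- `c, a` is an atomic representation of `f` in `H¹[0,1]` (convergence in `L¹`). -/
def H1Rep (f : ℝ → ℝ) (c : ℕ → ℝ) (a : ℕ → ℝ → ℝ) : Prop :=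
  (∀ n, IsAtom1 (a n)) ∧ Summable (fun n => |c n|) ∧
  Filter.Tendsto
    (fun N => ∫ x in Set.Icc (0:ℝ) 1, |f x - ∑ n ∈ Finset.range N, c n * a n x|)
    Filter.atTop (nhds 0)

/-- Membership in the atomic Hardy space `H¹[0,1]`. -/
def MemH1 (f : ℝ → ℝ) : Prop := ∃ c a, H1Rep f c a

/-- The atomic `H¹[0,1]` norm. -/
noncomputable def H1norm (f : ℝ → ℝ) : ℝ :=
  sInf {s | ∃ c a, H1Rep f c a ∧ s = ∑' n, |c n|}

/-- The square function of the series `∑ aₙ fₙ`. -/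
noncomputable def Pfun (a : ℕ → ℝ) (f : ℕ → ℝ → ℝ) (x : ℝ) : ℝ :=
  Real.sqrt (∑' m, (a m * f m x)^2)

/-- The maximal function of the partial sums of the series `∑ aₙ fₙ`. -/
noncomputable def Sfun (a : ℕ → ℝ) (f : ℕ → ℝ → ℝ) (x : ℝ) : ℝ :=
  ⨆ N : ℕ, |∑ m ∈ Finset.range N, a m * f m x|

end

theorem List.countP_add_countP_le {α : Type*} {p q r : α → Bool} (l : List α)
    (hp : ∀ x, p x → r x) (hq : ∀ x, q x → r x) (hpq : ∀ x, p x → ¬ q x) :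
    l.countP p + l.countP q ≤ l.countP r := by
  induction l with
  | nil => simp
  | cons a l ih =>
    simp only [List.countP_cons]
    have := hp a; have := hq a; have := hpq a
    split_ifs <;> simp_all <;> omega

namespace List.SortedLE

variable {α : Type*} [LinearOrder α] {l : List α}

theorem add_one_le_countP_of_getElem {p : α → Bool} (hl : l.SortedLE)
    (hp : ∀ ⦃x y⦄, x ≤ y → p y → p x) {i : ℕ} (hi : i < l.length) (h : p l[i]) :
    i + 1 ≤ l.countP p := by
  have htake : (l.take (i + 1)).countP p = i + 1 := by
    rw [countP_eq_length.mpr, length_take_of_le hi]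
    intro x hx
    obtain ⟨m, hm, rfl⟩ := getElem_of_mem hx
    rw [getElem_take]
    exact hp (hl.getElem_le_getElem_of_le (by rw [length_take] at hm; omega)) h
  exact htake ▸ (take_prefix _ _).countP_le

theorem countP_le_of_not_getElem {p : α → Bool} (hl : l.SortedLE)
    (hp : ∀ ⦃x y⦄, x ≤ y → p y → p x) {i : ℕ} (hi : i < l.length) (h : ¬ p l[i]) :
    l.countP p ≤ i := by
  have hdrop : (l.drop i).countP p = 0 := by
    rw [countP_eq_zero]
    intro x hx hpx
    obtain ⟨m, hm, rfl⟩ := getElem_of_mem hx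
    rw [getElem_drop] at hpx
    exact h (hp (hl.getElem_le_getElem_of_le (by omega)) hpx)
  calc l.countP p = (l.take i).countP p := by
        conv_lhs => rw [← take_append_drop i l]
        rw [countP_append, hdrop, add_zero]
    _ ≤ i := countP_le_length.trans (length_take_le _ _)

theorem getElem_eq_of_countP_le_of_lt_countP (hl : l.SortedLE) {v : α} {i : ℕ}
    (hi : i < l.length) (hlt : l.countP (· < v) ≤ i) (hle : i < l.countP (· ≤ v)) :
    l[i] = v := by
  refine le_antisymm (not_lt.mp fun h => ?_) (not_lt.mp fun h => ?_)
  · have := hl.countP_le_of_not_getElem (p := (· ≤ v))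
      (fun _ _ hxy hy => decide_eq_true (hxy.trans (of_decide_eq_true hy))) hi (by simpa using h)
    omega
  · have := hl.add_one_le_countP_of_getElem (p := (· < v))
      (fun _ _ hxy hy => decide_eq_true (hxy.trans_lt (of_decide_eq_true hy))) hi (by simpa using h)
    omega

theorem countP_mem_Ioo_le (hl : l.SortedLE) {i j : ℕ} (hij : i ≤ j) (hj : j < l.length) :
    l.countP (· ∈ Ioo l[i] l[j]) ≤ j - i - 1 := by
  rcases (hl.getElem_le_getElem_of_le hij : l[i] ≤ l[j]).eq_or_lt with heq | hlt
  · simp [heq]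
  have hle := hl.add_one_le_countP_of_getElem (p := (· ≤ l[i]))
    (fun _ _ hxy hy => decide_eq_true (hxy.trans (of_decide_eq_true hy)))
    (hij.trans_lt hj) (by simp)
  have hlt' := hl.countP_le_of_not_getElem (p := (· < l[j]))
    (fun _ _ hxy hy => decide_eq_true (hxy.trans_lt (of_decide_eq_true hy))) hj (by simp)
  have := l.countP_add_countP_le (p := (· ≤ l[i])) (q := (· ∈ Ioo l[i] l[j]))
    (r := (· < l[j])) (fun _ hx => by simp only [decide_eq_true_eq] at hx ⊢; exact hx.trans_lt hlt)
    (fun _ hx => by simp_all) (fun _ hx => by simp_all)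
  omega

end List.SortedLE

theorem Finset.card_le_mul_of_abs_sub_lt {ι : Type*} (s : Finset ι) (f : ι → ℝ) {a δ : ℝ}
    {N M : ℕ} (hδ : 0 < δ) (hf : ∀ i ∈ s, f i ∈ Set.Icc a (a + N * δ))
    (hM : ∀ t ⊆ s, (∀ i ∈ t, ∀ j ∈ t, |f i - f j| < δ) → t.card ≤ M) :
    s.card ≤ M * (N + 1) := by
  set g : ι → ℕ := fun i => ⌊(f i - a) / δ⌋₊
  have hg_nonneg (i) (hi : i ∈ s) : 0 ≤ (f i - a) / δ :=
    div_nonneg (sub_nonneg.mpr (hf i hi).1) hδ.le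
  have hmaps (i) (hi : i ∈ s) : g i ∈ Finset.range (N + 1) := by
    rw [Finset.mem_range, Nat.lt_succ_iff]
    exact Nat.floor_le_of_le ((div_le_iff₀ hδ).mpr (by linarith [(hf i hi).2]))
  have hfiber : ∀ b ∈ Finset.range (N + 1), (s.filter (g · = b)).card ≤ M := by
    intro b _
    refine hM _ (Finset.filter_subset _ _) fun i hi j hj => ?_
    simp only [Finset.mem_filter] at hi hj
    obtain ⟨hi1, hi2⟩ := (Nat.floor_eq_iff (hg_nonneg i hi.1)).mp hi.2
    obtain ⟨hj1, hj2⟩ := (Nat.floor_eq_iff (hg_nonneg j hj.1)).mp hj.2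
    have : |(f i - a) / δ - (f j - a) / δ| < 1 := abs_sub_lt_iff.mpr ⟨by linarith, by linarith⟩
    rwa [← sub_div, abs_div, abs_of_pos hδ, div_lt_one hδ, sub_sub_sub_cancel_right] at this
  simpa using Finset.card_le_mul_card_image_of_maps_to hmaps M hfiber

theorem Nat.finite_setOf_le_and_le_and (a b : ℕ) (q : ℕ → Prop) :
    {j | a ≤ j ∧ j ≤ b ∧ q j}.Finite :=
  (Set.finite_Icc a b).subset fun _ hj => ⟨hj.1, hj.2.1⟩

theorem sub_le_mul_of_forall_add_one_sub_le (f : ℕ → ℝ) {j m : ℕ} {δ : ℝ}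
    (h : ∀ i < m, f (j + i + 1) - f (j + i) ≤ δ) : f (j + m) - f j ≤ m * δ := by
  induction m with
  | zero => simp
  | succ m ih =>
    have hlast := h m m.lt_succ_self
    have hinit := ih fun i hi => h i (hi.trans m.lt_succ_self)
    push_cast
    rw [← add_assoc]
    linarith

namespace KnotSeq

variable {k : ℕ} {n : ℕ}

section Knots

variable (K : KnotSeq k)

theorem plist_sortedLE : (K.plist n).SortedLE := List.sortedLE_mergeSort

theorem length_plist : (K.plist n).length = 2 * k + (n - 1) := by
  rw [plist, (List.mergeSort_perm _ _).length_eq]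
  simp only [List.length_append, List.length_replicate, List.length_map, List.length_range]
  ring

theorem ncard_eq_countP (p : ℝ → Bool) :
    {j | 2 ≤ j ∧ j ≤ n ∧ p (K.t j)}.ncard
      = ((List.range (n - 1)).map fun j => K.t (j + 2)).countP p := by
  have : {j | 2 ≤ j ∧ j ≤ n ∧ p (K.t j)} = ↑((Finset.Icc 2 n).filter fun j => p (K.t j)) := by
    ext j; simp [and_assoc]
  rw [this, Set.ncard_coe_finset]
  simp [Finset.card, Finset.filter, Nat.Icc_eq_range', List.countP_eq_length_filter,
    List.range'_eq_map_range, List.filter_map, Function.comp_def, add_comm]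

theorem countP_plist (p : ℝ → Bool) :
    (K.plist n).countP p = (if p 0 then k else 0) + (if p 1 then k else 0)
      + {j | 2 ≤ j ∧ j ≤ n ∧ p (K.t j)}.ncard := by
  rw [plist, (List.mergeSort_perm _ _).countP_eq, ncard_eq_countP]
  simp only [List.countP_append, List.countP_replicate]

theorem i0_eq : K.i0 n = k + {j | 2 ≤ j ∧ j ≤ n ∧ K.t j ≤ K.t n}.ncard := by
  have hsplit : {j | 2 ≤ j ∧ j ≤ n ∧ K.t j ≤ K.t n}
      = {j | 2 ≤ j ∧ j ≤ n ∧ K.t j < K.t n} ∪ {j | 2 ≤ j ∧ j ≤ n ∧ K.t j = K.t n} := by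
    ext j; simp only [mem_ofPred_eq, mem_union, le_iff_lt_or_eq]; tauto
  rw [hsplit, Set.ncard_union_eq (Set.disjoint_left.mpr fun j h1 h2 => h1.2.2.ne h2.2.2)
    (Nat.finite_setOf_le_and_le_and _ _ _) (Nat.finite_setOf_le_and_le_and _ _ _), i0, add_assoc]

theorem i0_le (n : ℕ) : K.i0 n ≤ k + (n - 1) := by
  have := (K.ncard_eq_countP (n := n) (· ≤ K.t n)).trans_le List.countP_le_length
  simp only [decide_eq_true_eq, List.length_map, List.length_range] at this
  rw [i0_eq]
  omega

theorem k_lt_i0 (hn : 2 ≤ n) : k < K.i0 n := by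
  have := (Set.ncard_pos (Nat.finite_setOf_le_and_le_and 2 n (K.t · ≤ K.t n))).mpr
    ⟨n, hn, le_rfl, le_rfl⟩
  rw [i0_eq]
  omega

theorem i0_eq_countP_le (hn : 2 ≤ n) : K.i0 n = (K.plist n).countP (· ≤ K.t n) := by
  have ht := K.mem_Ioo n hn
  rw [countP_plist, i0_eq]
  simp only [decide_eq_true_eq, if_pos ht.1.le, if_neg (not_le.mpr ht.2), add_zero]

theorem countP_lt_lt_i0 (hn : 2 ≤ n) : (K.plist n).countP (· < K.t n) < K.i0 n := by
  have ht := K.mem_Ioo n hn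
  have := (Set.ncard_pos (Nat.finite_setOf_le_and_le_and 2 n (K.t · = K.t n))).mpr
    ⟨n, hn, le_rfl, rfl⟩
  rw [countP_plist]
  simp only [decide_eq_true_eq, if_pos ht.1, if_neg (not_lt.mpr ht.2.le), i0]
  omega

theorem τ_eq_getElem {i : ℕ} (hi : 1 ≤ i) (hiN : i ≤ 2 * k + (n - 1)) :
    K.τ n i = (K.plist n)[i - 1]'(by rw [length_plist]; omega) :=
  List.getD_eq_getElem _ _ _

theorem τ_le_τ {i j : ℕ} (hi : 1 ≤ i) (hij : i ≤ j) (hjN : j ≤ 2 * k + (n - 1)) :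
    K.τ n i ≤ K.τ n j := by
  rw [K.τ_eq_getElem hi (hij.trans hjN), K.τ_eq_getElem (hi.trans hij) hjN]
  exact K.plist_sortedLE.getElem_le_getElem_of_le (by omega)

theorem τ_i0 (hn : 2 ≤ n) : K.τ n (K.i0 n) = K.t n := by
  have hi0 := K.k_lt_i0 hn
  have hlt := K.countP_lt_lt_i0 hn
  rw [K.τ_eq_getElem (by omega) ((K.i0_le n).trans (by omega))]
  exact K.plist_sortedLE.getElem_eq_of_countP_le_of_lt_countP _ (by omega)
    (by rw [← K.i0_eq_countP_le hn]; omega)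

theorem ncard_mem_Ioo_τ_le {i j : ℕ} (hi : 1 ≤ i) (hij : i ≤ j) (hjN : j ≤ 2 * k + (n - 1)) :
    {m | 2 ≤ m ∧ m ≤ n ∧ K.t m ∈ Ioo (K.τ n i) (K.τ n j)}.ncard ≤ j - i - 1 := by
  have hcount := K.countP_plist (n := n) (· ∈ Ioo (K.τ n i) (K.τ n j))
  have hIoo := (K.plist_sortedLE (n := n)).countP_mem_Ioo_le (i := i - 1) (j := j - 1)
    (by omega) (by rw [length_plist]; omega)
  rw [← K.τ_eq_getElem hi (by omega), ← K.τ_eq_getElem (by omega) hjN] at hIoo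
  simp only [decide_eq_true_eq] at hcount hIoo
  omega

theorem card_le_of_forall_mem_Ioo_τ (hn : 2 ≤ n) (C : Finset ℕ)
    (hC : ∀ m ∈ C, 2 ≤ m ∧ m ≤ n ∧ K.t m ∈ Ioo (K.τ n (K.i0 n - k)) (K.τ n (K.i0 n + k))) :
    C.card ≤ 2 * k - 1 := by
  have hi0 := K.k_lt_i0 hn
  have hN := K.i0_le n
  calc C.card = (C : Set ℕ).ncard := (Set.ncard_coe_finset C).symm
    _ ≤ {m | 2 ≤ m ∧ m ≤ n ∧ K.t m ∈ Ioo (K.τ n (K.i0 n - k)) (K.τ n (K.i0 n + k))}.ncard :=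
      Set.ncard_le_ncard hC (Nat.finite_setOf_le_and_le_and _ _ _)
    _ ≤ (K.i0 n + k) - (K.i0 n - k) - 1 :=
      K.ncard_mem_Ioo_τ_le (i := K.i0 n - k) (j := K.i0 n + k) (by omega) (by omega) (by omega)
    _ = 2 * k - 1 := by omega

end Knots

namespace IsCharInterval

variable {K : KnotSeq k} {J : Set ℝ}

theorem exists_mem_Λ0 (hJ : K.IsCharInterval n J) (hn : 2 ≤ n) :
    ∃ j ∈ K.Λ0 n, J ⊆ Icc (K.τ n j) (K.τ n (j + k)) ∧
      (volume J).toReal ≤ K.len n j k ∧ K.len n j k ≤ k * (volume J).toReal := by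
  obtain ⟨j, hjΛ1, l, hl, rfl, hmax⟩ := hJ
  have hjΛ0 := (Finset.mem_filter.mp hjΛ1).1
  have hj := Finset.mem_Icc.mp (Finset.mem_filter.mp hjΛ0).1
  have hi0 := K.k_lt_i0 hn
  have hN := K.i0_le n
  have hmono {a b : ℕ} (ha : j ≤ a) (hab : a ≤ b) (hb : b ≤ j + k) : K.τ n a ≤ K.τ n b :=
    K.τ_le_τ (by omega) hab (by omega)
  have hjl : K.τ n j ≤ K.τ n (j + l) := hmono le_rfl (by omega) (by omega)
  have hl1 : K.τ n (j + l) ≤ K.τ n (j + l + 1) := hmono (by omega) (by omega) (by omega)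
  have hjk : K.τ n (j + l + 1) ≤ K.τ n (j + k) := hmono (by omega) (by omega) le_rfl
  rw [Real.volume_Icc, ENNReal.toReal_ofReal (sub_nonneg.mpr hl1)]
  exact ⟨j, hjΛ0, Icc_subset_Icc hjl hjk, sub_le_sub hjk hjl,
    sub_le_mul_of_forall_add_one_sub_le (K.τ n) hmax⟩

theorem abs_sub_le (hJ : K.IsCharInterval n J) (hn : 2 ≤ n) {z : ℝ} (hz : z ∈ J) :
    |K.t n - z| ≤ k * (volume J).toReal := by
  obtain ⟨j, hjΛ0, hJsub, -, hlen⟩ := hJ.exists_mem_Λ0 hn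
  have hj := Finset.mem_Icc.mp (Finset.mem_filter.mp hjΛ0).1
  have hi0 := K.k_lt_i0 hn
  have hN := K.i0_le n
  have ht : K.t n ∈ Icc (K.τ n j) (K.τ n (j + k)) := K.τ_i0 hn ▸
    ⟨K.τ_le_τ (by omega) hj.2 (by omega), K.τ_le_τ (j := j + k) (by omega) (by omega) (by omega)⟩
  exact (Real.dist_le_of_mem_Icc ht (hJsub hz)).trans hlen

theorem mem_Icc_of_subset (hJ : K.IsCharInterval n J) (hn : 2 ≤ n) {x y : ℝ}
    (hsub : J ⊆ Icc x y) (hJpos : 0 < (volume J).toReal) :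
    K.t n ∈ Icc (x - k * (y - x)) (y + k * (y - x)) := by
  obtain ⟨z, hz⟩ := nonempty_of_measure_ne_zero (μ := volume) (s := J)
    fun h => by simp [h] at hJpos
  have hzxy := hsub hz
  have hvol : (volume J).toReal ≤ y - x := by
    have := ENNReal.toReal_mono (measure_Icc_lt_top (μ := volume)).ne (measure_mono hsub)
    rwa [Real.volume_Icc, ENNReal.toReal_ofReal (by linarith [hzxy.1, hzxy.2])] at this
  have hdist := abs_le.mp (hJ.abs_sub_le hn hz)
  have hkvol := mul_le_mul_of_nonneg_left hvol k.cast_nonneg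
  exact ⟨by linarith [hzxy.1], by linarith [hzxy.2]⟩

theorem toReal_volume_le (hJ : K.IsCharInterval n J) (hn : 2 ≤ n) :
    (volume J).toReal ≤ 2 * (K.t n - K.τ n (K.i0 n - k)) ∧
      (volume J).toReal ≤ 2 * (K.τ n (K.i0 n + k) - K.t n) := by
  obtain ⟨j, hjΛ0, -, hvol, -⟩ := hJ.exists_mem_Λ0 hn
  obtain ⟨hj, hmin⟩ := Finset.mem_filter.mp hjΛ0
  have hi0 := K.k_lt_i0 hn
  have hleft := hmin (K.i0 n - k) (Finset.mem_Icc.mpr ⟨le_rfl, by omega⟩)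
  have hright := hmin (K.i0 n) (Finset.mem_Icc.mpr ⟨by omega, le_rfl⟩)
  unfold len at hvol hleft hright
  rw [Nat.sub_add_cancel hi0.le, K.τ_i0 hn] at hleft
  rw [K.τ_i0 hn] at hright
  constructor <;> linarith

end IsCharInterval

end KnotSeq

theorem charInterval_count_bound_general (k : ℕ) :
    ∃ F : ℕ,
      ∀ (K : KnotSeq k) (J : ℕ → Set ℝ),
        (∀ n, 2 ≤ n → K.IsCharInterval n (J n)) →
        ∀ (p q : ℕ), K.t p < K.t q →
          ∀ s : Finset ℕ,
            (∀ n ∈ s, 2 ≤ n ∧ J n ⊆ Set.Icc (K.t p) (K.t q) ∧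
              (K.t q - K.t p) / 2 ≤ (MeasureTheory.volume (J n)).toReal) →
            s.card ≤ F := by
  refine ⟨(2 * k - 1) * (8 * k + 5), fun K J hJ p q hpq s hs => ?_⟩
  set L := K.t q - K.t p
  have hL : 0 < L := sub_pos.mpr hpq
  have hrange (n) (hn : n ∈ s) :
      K.t n ∈ Icc (K.t p - k * L) (K.t p - k * L + ↑(8 * k + 4) * (L / 4)) := by
    obtain ⟨h2, hsub, hhalf⟩ := hs n hn
    convert (hJ n h2).mem_Icc_of_subset h2 hsub (by linarith) using 2
    push_cast
    ring
  refine s.card_le_mul_of_abs_sub_lt K.t (by positivity) hrange fun C hC hclose => ?_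
  obtain rfl | hne := C.eq_empty_or_nonempty
  · simp
  have hn := hs _ (hC (C.max'_mem hne))
  have hspan := (hJ _ hn.1).toReal_volume_le hn.1
  refine K.card_le_of_forall_mem_Ioo_τ hn.1 C fun m hm => ⟨(hs m (hC hm)).1, C.le_max' m hm, ?_⟩
  have := abs_lt.mp (hclose m hm _ (C.max'_mem hne))
  constructor <;> linarith [hn.2.2]

/-- Lemma 4.5 (combinatorics of characteristic intervals): there is a constant `F_k`
depending only on `k` such that for any two knots `x < y`, the number of indices `n`
with `J_n ⊆ [x,y]` and `|J_n| ≥ |[x,y]|/2` is at most `F_k`. -/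
theorem charInterval_count_bound (k : ℕ) (hk : 2 ≤ k) :
    ∃ F : ℕ,
      ∀ (K : KnotSeq k) (J : ℕ → Set ℝ),
        (∀ n, 2 ≤ n → K.IsCharInterval n (J n)) →
        ∀ (p q : ℕ), K.t p < K.t q →
          ∀ s : Finset ℕ,
            (∀ n ∈ s, 2 ≤ n ∧ J n ⊆ Set.Icc (K.t p) (K.t q) ∧
              (K.t q - K.t p) / 2 ≤ (MeasureTheory.volume (J n)).toReal) →
            s.card ≤ F :=
  charInterval_count_bound_general k
end

section
/- Let (f_n) be an orthonormal system in L²[0,1] and (a_n) real coefficients such that the series Σ_n a_n f_n converges unconditionally in L¹[0,1]. Then the square function P = (Σ_n a_n² f_n²)^{1/2} belongs to L¹[0,1] and ‖P‖₁ ≤ C · sup_{ε ∈ {−1,1}^ℕ} ‖Σ_n ε_n a_n f_n‖₁ for an absolute constant C. -/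
/-!
Averaging over the `2 ^ N` sign patterns, Khinchin's inequality with constant `√3` (a consequence
of the exact second moment and the bound `3 (∑ bₙ²)²` on the fourth moment, via
`(∑ x²)³ ≤ (∑ |x|)² ∑ x⁴`) bounds the partial square function `(∑_{n<N} aₙ² fₙ²)^{1/2}` pointwise
by `√3` times the mean of `|∑_{n<N} ±aₙ fₙ|`. Each such signed partial sum has `L¹` norm at most
`B`: it is the average of two full signed series that agree before `N` and have opposite signs
from `N` on. Monotone convergence in `N` then gives the theorem with `C = √3`.
-/

open MeasureTheory Set Filter

/- Two applications of Cauchy–Schwarz: `(∑ x²)² ≤ ∑ |x| · ∑ |x|³` and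
`(∑ |x|³)² ≤ ∑ x² · ∑ x⁴`. -/
lemma sum_sq_pow_three_le_sq_sum_abs_mul_sum_pow_four {ι : Type*} (s : Finset ι) (x : ι → ℝ) :
    (∑ i ∈ s, x i ^ 2) ^ 3 ≤ (∑ i ∈ s, |x i|) ^ 2 * ∑ i ∈ s, x i ^ 4 := by
  have h₁ : (∑ i ∈ s, x i ^ 2) ^ 2 ≤ (∑ i ∈ s, |x i|) * ∑ i ∈ s, |x i| ^ 3 :=
    Finset.sum_sq_le_sum_mul_sum_of_sq_le_mul s (fun i _ => abs_nonneg _)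
      (fun i _ => by positivity) fun i _ => le_of_eq (by rw [← sq_abs (x i)]; ring)
  have h₂ : (∑ i ∈ s, |x i| ^ 3) ^ 2 ≤ (∑ i ∈ s, x i ^ 2) * ∑ i ∈ s, x i ^ 4 :=
    Finset.sum_sq_le_sum_mul_sum_of_sq_le_mul s (fun i _ => by positivity)
      (fun i _ => by positivity) fun i _ => le_of_eq (by
        rw [← sq_abs (x i), ← (by decide : Even 4).pow_abs]; ring)
  have hQ : 0 ≤ ∑ i ∈ s, x i ^ 2 := Finset.sum_nonneg fun i _ => sq_nonneg (x i)
  rcases hQ.eq_or_lt with h | h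
  · rw [← h, zero_pow three_ne_zero]; positivity
  · nlinarith [mul_le_mul_of_nonneg_left h₂ (sq_nonneg (∑ i ∈ s, |x i|)),
      sq_nonneg (∑ i ∈ s, |x i| ^ 3)]

section Khinchin

variable {ι : Type*} [DecidableEq ι]

/- A sign vector `ε ∈ {±1}^s` is encoded by the subset `t = {i | ε i = 1}`, so a sum over
`s.powerset` is `2 ^ #s` times the expectation over independent random signs. -/
def subsetSign (t : Finset ι) (i : ι) : ℝ := if i ∈ t then 1 else -1

lemma subsetSign_eq_one_or_eq_neg_one (t : Finset ι) (i : ι) :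
    subsetSign t i = 1 ∨ subsetSign t i = -1 := by
  unfold subsetSign
  split_ifs <;> simp

def signedSum (s t : Finset ι) (b : ι → ℝ) : ℝ := ∑ i ∈ s, subsetSign t i * b i

lemma sum_powerset_insert_signedSum {s : Finset ι} {a : ι} (ha : a ∉ s) (b : ι → ℝ)
    (F : ℝ → ℝ) :
    ∑ t ∈ (insert a s).powerset, F (signedSum (insert a s) t b) =
      ∑ t ∈ s.powerset, (F (signedSum s t b - b a) + F (signedSum s t b + b a)) := by
  rw [Finset.sum_powerset_insert ha, ← Finset.sum_add_distrib]
  refine Finset.sum_congr rfl fun t ht => ?_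
  have hat : a ∉ t := fun h => ha (Finset.mem_powerset.1 ht h)
  have hinsert : signedSum s (insert a t) b = signedSum s t b :=
    Finset.sum_congr rfl fun i hi => by
      simp [subsetSign, ne_of_mem_of_not_mem hi ha]
  have hout : signedSum (insert a s) t b = signedSum s t b - b a := by
    simp only [signedSum, Finset.sum_insert ha, subsetSign, if_neg hat]
    ring
  have hin : signedSum (insert a s) (insert a t) b = signedSum s t b + b a := by
    rw [← hinsert]
    simp only [signedSum, Finset.sum_insert ha, subsetSign, if_pos (Finset.mem_insert_self a t)]
    ring
  rw [hout, hin]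

lemma sum_powerset_signedSum_sq (s : Finset ι) (b : ι → ℝ) :
    ∑ t ∈ s.powerset, signedSum s t b ^ 2 = 2 ^ s.card * ∑ i ∈ s, b i ^ 2 := by
  induction s using Finset.induction_on with
  | empty => simp [signedSum]
  | insert a s ha ih =>
    have hpair (x : ℝ) : (x - b a) ^ 2 + (x + b a) ^ 2 = 2 * x ^ 2 + 2 * b a ^ 2 := by ring
    refine (sum_powerset_insert_signedSum ha b (· ^ 2)).trans ?_
    simp only [hpair, Finset.sum_add_distrib, ← Finset.mul_sum, ih, Finset.sum_const,
      Finset.card_powerset, Finset.card_insert_of_notMem ha, Finset.sum_insert ha, nsmul_eq_mul,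
      Nat.cast_pow, Nat.cast_ofNat]
    ring

lemma sum_powerset_signedSum_pow_four_le (s : Finset ι) (b : ι → ℝ) :
    ∑ t ∈ s.powerset, signedSum s t b ^ 4 ≤ 3 * 2 ^ s.card * (∑ i ∈ s, b i ^ 2) ^ 2 := by
  induction s using Finset.induction_on with
  | empty => simp [signedSum]
  | insert a s ha ih =>
    have hpair (x : ℝ) :
        (x - b a) ^ 4 + (x + b a) ^ 4 = 2 * x ^ 4 + 12 * b a ^ 2 * x ^ 2 + 2 * b a ^ 4 := by
      ring
    refine (sum_powerset_insert_signedSum ha b (· ^ 4)).trans_le ?_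
    simp only [hpair, Finset.sum_add_distrib, ← Finset.mul_sum, sum_powerset_signedSum_sq,
      Finset.sum_const, Finset.card_powerset, Finset.card_insert_of_notMem ha, Finset.sum_insert ha,
      nsmul_eq_mul, Nat.cast_pow, Nat.cast_ofNat]
    rw [pow_succ (2 : ℝ) s.card]
    have hQ : 0 ≤ ∑ i ∈ s, b i ^ 2 := Finset.sum_nonneg fun i _ => sq_nonneg (b i)
    nlinarith [pow_pos (two_pos (α := ℝ)) s.card, mul_nonneg hQ (sq_nonneg (b a)),
      pow_nonneg (sq_nonneg (b a)) 2]

/- Khinchin's inequality for `p = 1`, summed over all sign patterns. -/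
theorem two_pow_card_mul_sqrt_sum_sq_le (s : Finset ι) (b : ι → ℝ) :
    2 ^ s.card * √(∑ i ∈ s, b i ^ 2) ≤ √3 * ∑ t ∈ s.powerset, |signedSum s t b| := by
  set Q := ∑ i ∈ s, b i ^ 2
  set A := ∑ t ∈ s.powerset, |signedSum s t b|
  have hQ : 0 ≤ Q := Finset.sum_nonneg fun i _ => sq_nonneg (b i)
  have hA : 0 ≤ A := Finset.sum_nonneg fun t _ => abs_nonneg _
  have h2 : (0 : ℝ) < 2 ^ s.card := by positivity
  have hmoments : (2 ^ s.card * Q) ^ 3 ≤ A ^ 2 * (3 * 2 ^ s.card * Q ^ 2) := by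
    rw [← sum_powerset_signedSum_sq]
    exact (sum_sq_pow_three_le_sq_sum_abs_mul_sum_pow_four _ _).trans
      (mul_le_mul_of_nonneg_left (sum_powerset_signedSum_pow_four_le s b) (sq_nonneg A))
  have hsq : (2 ^ s.card) ^ 2 * Q ≤ 3 * A ^ 2 := by
    rcases hQ.eq_or_lt with hQ0 | hQpos
    · rw [← hQ0, mul_zero]; positivity
    · refine le_of_mul_le_mul_right ?_ (by positivity : 0 < 2 ^ s.card * Q ^ 2)
      linear_combination hmoments
  rw [← Real.sqrt_sq h2.le, ← Real.sqrt_sq hA, ← Real.sqrt_mul (by positivity),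
    ← Real.sqrt_mul (by norm_num)]
  exact Real.sqrt_le_sqrt hsq

end Khinchin

lemma sum_range_mul_add_sum_range_flip_mul (ε c : ℕ → ℝ) {N M : ℕ} (hNM : N ≤ M) :
    ∑ n ∈ Finset.range M, ε n * c n + ∑ n ∈ Finset.range M, (if n < N then ε n else -ε n) * c n =
      2 * ∑ n ∈ Finset.range N, ε n * c n := by
  rw [← Finset.sum_add_distrib, ← Finset.sum_range_add_sum_Ico _ hNM, Finset.mul_sum]
  have htail : ∀ n ∈ Finset.Ico N M,
      ε n * c n + (if n < N then ε n else -ε n) * c n = 0 := fun n hn => by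
    simp [(Finset.mem_Ico.1 hn).1.not_gt]
  rw [Finset.sum_eq_zero htail, add_zero]
  refine Finset.sum_congr rfl fun n hn => ?_
  rw [if_pos (Finset.mem_range.1 hn)]
  ring

lemma monotone_ofReal_sqrt_sum_range {v : ℕ → ℝ} (hv : ∀ n, 0 ≤ v n) :
    Monotone fun N => ENNReal.ofReal √(∑ n ∈ Finset.range N, v n) := fun _ _ hNM =>
  ENNReal.ofReal_le_ofReal <| Real.sqrt_le_sqrt <|
    Finset.sum_le_sum_of_subset_of_nonneg (Finset.range_subset_range.2 hNM) fun n _ _ => hv n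

lemma summable_and_ofReal_sqrt_tsum_eq_iSup {v : ℕ → ℝ} (hv : ∀ n, 0 ≤ v n)
    (hfin : ⨆ N, ENNReal.ofReal √(∑ n ∈ Finset.range N, v n) ≠ ⊤) :
    Summable v ∧
      ENNReal.ofReal √(∑' n, v n) = ⨆ N, ENNReal.ofReal √(∑ n ∈ Finset.range N, v n) := by
  set G := ⨆ N, ENNReal.ofReal √(∑ n ∈ Finset.range N, v n)
  have hsum : Summable v := by
    refine summable_of_sum_range_le hv (c := G.toReal ^ 2) fun N => ?_
    rw [← Real.sqrt_le_left ENNReal.toReal_nonneg]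
    exact (ENNReal.ofReal_le_iff_le_toReal hfin).1 (le_iSup_iff.2 fun _ h => h N)
  refine ⟨hsum, tendsto_nhds_unique ?_ (tendsto_atTop_iSup (monotone_ofReal_sqrt_sum_range hv))⟩
  exact (ENNReal.continuous_ofReal.tendsto _).comp
    ((Real.continuous_sqrt.tendsto _).comp hsum.hasSum.tendsto_sum_nat)

section

variable {α : Type*} [MeasurableSpace α] {μ : Measure α}

lemma tendsto_integral_abs_of_tendsto_integral_abs_sub {β : Type*} {l : Filter β}
    {S : β → α → ℝ} {g : α → ℝ} (hS : ∀ M, Integrable (S M) μ) (hg : Integrable g μ)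
    (h : Tendsto (fun M => ∫ x, |g x - S M x| ∂μ) l (nhds 0)) :
    Tendsto (fun M => ∫ x, |S M x| ∂μ) l (nhds (∫ x, |g x| ∂μ)) := by
  rw [tendsto_iff_norm_sub_tendsto_zero]
  refine squeeze_zero (fun _ => norm_nonneg _) (fun M => ?_) h
  rw [← integral_sub (hS M).abs hg.abs]
  refine (norm_integral_le_integral_norm _).trans (integral_mono ((hS M).abs.sub hg.abs).norm
    (hg.sub (hS M)).abs fun x => ?_)
  rw [abs_sub_comm (g x)]
  exact norm_abs_sub_abs _ _

lemma integral_abs_sum_range_le_of_unconditional {u : ℕ → α → ℝ}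
    (hu : ∀ n, Integrable (u n) μ) {B : ℝ}
    (hconv : ∀ ε : ℕ → ℝ, (∀ n, ε n = 1 ∨ ε n = -1) →
      ∃ g : α → ℝ, Integrable g μ ∧
        Tendsto (fun N => ∫ x, |g x - ∑ n ∈ Finset.range N, ε n * u n x| ∂μ) atTop (nhds 0))
    (hB : ∀ ε : ℕ → ℝ, (∀ n, ε n = 1 ∨ ε n = -1) → ∀ g : α → ℝ,
      Tendsto (fun N => ∫ x, |g x - ∑ n ∈ Finset.range N, ε n * u n x| ∂μ) atTop (nhds 0) →
        ∫ x, |g x| ∂μ ≤ B)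
    {ε : ℕ → ℝ} (hε : ∀ n, ε n = 1 ∨ ε n = -1) (N : ℕ) :
    ∫ x, |∑ n ∈ Finset.range N, ε n * u n x| ∂μ ≤ B := by
  have hsums (ε : ℕ → ℝ) (M : ℕ) :
      Integrable (fun x => ∑ n ∈ Finset.range M, ε n * u n x) μ :=
    integrable_finsetSum _ fun n _ => (hu n).const_mul (ε n)
  have hlim {ε : ℕ → ℝ} (hε : ∀ n, ε n = 1 ∨ ε n = -1) : ∃ L ≤ B,
      Tendsto (fun M => ∫ x, |∑ n ∈ Finset.range M, ε n * u n x| ∂μ) atTop (nhds L) := by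
    obtain ⟨g, hg, hg_lim⟩ := hconv ε hε
    exact ⟨_, hB ε hε g hg_lim,
      tendsto_integral_abs_of_tendsto_integral_abs_sub (hsums ε) hg hg_lim⟩
  set ε' : ℕ → ℝ := fun n => if n < N then ε n else -ε n
  have hε' : ∀ n, ε' n = 1 ∨ ε' n = -1 := fun n => by
    by_cases h : n < N <;> rcases hε n with h' | h' <;> simp [ε', h, h']
  obtain ⟨L, hL, hS⟩ := hlim hε
  obtain ⟨L', hL', hS'⟩ := hlim hε'
  -- The sign sequences `ε` and `ε'` agree before `N` and are opposite from `N` on.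
  have hsplit : ∀ᶠ M in atTop, 2 * ∫ x, |∑ n ∈ Finset.range N, ε n * u n x| ∂μ ≤
      ∫ x, |∑ n ∈ Finset.range M, ε n * u n x| ∂μ +
        ∫ x, |∑ n ∈ Finset.range M, ε' n * u n x| ∂μ := by
    filter_upwards [eventually_ge_atTop N] with M hNM
    rw [← integral_const_mul, ← integral_add (hsums ε M).abs (hsums ε' M).abs]
    refine integral_mono ((hsums ε N).abs.const_mul 2) ((hsums ε M).abs.add (hsums ε' M).abs)
      fun x => ?_
    rw [← abs_two, ← abs_mul, ← sum_range_mul_add_sum_range_flip_mul ε (u · x) hNM]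
    exact abs_add_le _ _
  linarith [ge_of_tendsto (hS.add hS') hsplit]

lemma lintegral_sqrt_sum_range_sq_le {u : ℕ → α → ℝ} (hu : ∀ n, Integrable (u n) μ) {B : ℝ}
    (N : ℕ) (hB : ∀ t : Finset ℕ, ∫ x, |signedSum (Finset.range N) t (u · x)| ∂μ ≤ B) :
    ∫⁻ x, ENNReal.ofReal √(∑ n ∈ Finset.range N, u n x ^ 2) ∂μ ≤ ENNReal.ofReal (√3 * B) := by
  set R : α → ℝ := fun x =>
    √3 * (∑ t ∈ (Finset.range N).powerset, |signedSum (Finset.range N) t (u · x)|) / 2 ^ N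
  have hsigned (t : Finset ℕ) :
      Integrable (fun x => |signedSum (Finset.range N) t (u · x)|) μ :=
    (integrable_finsetSum _ fun n _ => (hu n).const_mul (subsetSign t n)).abs
  have hR : Integrable R μ :=
    ((integrable_finsetSum _ fun t _ => hsigned t).const_mul _).div_const _
  have hsqrt_le (x : α) : √(∑ n ∈ Finset.range N, u n x ^ 2) ≤ R x := by
    rw [le_div_iff₀ (by positivity), mul_comm]
    simpa using two_pow_card_mul_sqrt_sum_sq_le (Finset.range N) (u · x)
  have hR_le : ∫ x, R x ∂μ ≤ √3 * B := by
    rw [integral_div, integral_const_mul, integral_finsetSum _ fun t _ => hsigned t,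
      div_le_iff₀ (by positivity), mul_assoc]
    gcongr
    simpa [mul_comm B] using
      Finset.sum_le_card_nsmul (Finset.range N).powerset _ _ fun t _ => hB t
  calc ∫⁻ x, ENNReal.ofReal √(∑ n ∈ Finset.range N, u n x ^ 2) ∂μ
      ≤ ∫⁻ x, ENNReal.ofReal (R x) ∂μ :=
        lintegral_mono fun x => ENNReal.ofReal_le_ofReal (hsqrt_le x)
    _ = ENNReal.ofReal (∫ x, R x ∂μ) :=
      (ofReal_integral_eq_lintegral_ofReal hR (ae_of_all _ fun x => by positivity)).symm
    _ ≤ ENNReal.ofReal (√3 * B) := ENNReal.ofReal_le_ofReal hR_le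

lemma integrable_sqrt_tsum_of_lintegral_sqrt_sum_range_le {v : ℕ → α → ℝ}
    (hv : ∀ n, Measurable (v n)) (hv₀ : ∀ n x, 0 ≤ v n x) {K : ℝ} (hK₀ : 0 ≤ K)
    (hK : ∀ N, ∫⁻ x, ENNReal.ofReal √(∑ n ∈ Finset.range N, v n x) ∂μ ≤ ENNReal.ofReal K) :
    (∀ᵐ x ∂μ, Summable fun n => v n x) ∧ Integrable (fun x => √(∑' n, v n x)) μ ∧
      ∫ x, √(∑' n, v n x) ∂μ ≤ K := by
  -- The real `tsum` is junk off the summability set, so everything goes through the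
  -- supremum `G` of the partial square functions.
  -- The real `tsum` is junk off the summability set, so measurability and the integral bound
  -- go through the supremum `G` of the partial square functions.
  set G : α → ENNReal := fun x => ⨆ N, ENNReal.ofReal √(∑ n ∈ Finset.range N, v n x)
  have hmeas (N : ℕ) : Measurable fun x => ENNReal.ofReal √(∑ n ∈ Finset.range N, v n x) := by
    fun_prop
  have hG : ∫⁻ x, G x ∂μ ≤ ENNReal.ofReal K := by
    rw [lintegral_iSup hmeas fun N M h x => monotone_ofReal_sqrt_sum_range (hv₀ · x) h]
    exact iSup_le hK
  have hae : ∀ᵐ x ∂μ, (Summable fun n => v n x) ∧ ENNReal.ofReal √(∑' n, v n x) = G x := by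
    filter_upwards [ae_lt_top (Measurable.iSup hmeas) (hG.trans_lt ENNReal.ofReal_lt_top).ne]
      with x hx using summable_and_ofReal_sqrt_tsum_eq_iSup (hv₀ · x) hx.ne
  have hlint : ∫⁻ x, ENNReal.ofReal √(∑' n, v n x) ∂μ ≤ ENNReal.ofReal K :=
    (lintegral_congr_ae (hae.mono fun x hx => hx.2)).trans_le hG
  have hsm : AEStronglyMeasurable (fun x => √(∑' n, v n x)) μ := by
    refine (Measurable.iSup hmeas).ennreal_toReal.aestronglyMeasurable.congr ?_
    filter_upwards [hae] with x hx
    change (G x).toReal = _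
    rw [← hx.2, ENNReal.toReal_ofReal (Real.sqrt_nonneg _)]
  have hnn : 0 ≤ᵐ[μ] fun x => √(∑' n, v n x) := ae_of_all _ fun x => Real.sqrt_nonneg _
  refine ⟨hae.mono fun x hx => hx.1, ⟨hsm, ?_⟩, ?_⟩
  · rw [hasFiniteIntegral_iff_ofReal hnn]
    exact hlint.trans_lt ENNReal.ofReal_lt_top
  · rw [integral_eq_lintegral_of_nonneg_ae hnn hsm]
    exact ENNReal.toReal_le_of_le_ofReal hK₀ hlint

end

/-- Proposition (B) ⇒ (A): if `(fₙ)` is an orthonormal system on `[0,1]` and the series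
`∑ aₙ fₙ` converges unconditionally in `L¹[0,1]`, then the square function
`P = (∑ aₙ² fₙ²)^{1/2}` belongs to `L¹[0,1]` and `‖P‖₁ ≤ C · sup_ε ‖∑ εₙ aₙ fₙ‖₁`
for an absolute constant `C`. -/
theorem square_function_le_sup_signed_sums :
    ∃ C : ℝ, 0 < C ∧
      ∀ (f : ℕ → ℝ → ℝ) (a : ℕ → ℝ),
        (∀ m, Measurable (f m)) →
        (∀ m, IntegrableOn (fun x => (f m x)^2) (Set.Icc (0:ℝ) 1)) →
        (∀ m, (∫ x in (0:ℝ)..1, (f m x)^2) = 1) →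
        (∀ m m', m ≠ m' → (∫ x in (0:ℝ)..1, f m x * f m' x) = 0) →
        -- unconditional convergence in `L¹`:
        (∀ ε : ℕ → ℝ, (∀ n, ε n = 1 ∨ ε n = -1) →
          ∃ g : ℝ → ℝ, IntegrableOn g (Set.Icc (0:ℝ) 1) ∧
            Filter.Tendsto
              (fun N => ∫ x in Set.Icc (0:ℝ) 1,
                |g x - ∑ n ∈ Finset.range N, ε n * (a n * f n x)|)
              Filter.atTop (nhds 0)) →
        ∀ B : ℝ,
          (∀ ε : ℕ → ℝ, (∀ n, ε n = 1 ∨ ε n = -1) →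
            ∀ g : ℝ → ℝ,
              Filter.Tendsto
                (fun N => ∫ x in Set.Icc (0:ℝ) 1,
                  |g x - ∑ n ∈ Finset.range N, ε n * (a n * f n x)|)
                Filter.atTop (nhds 0) →
              (∫ x in Set.Icc (0:ℝ) 1, |g x|) ≤ B) →
          (∀ᵐ x ∂(volume.restrict (Set.Icc (0:ℝ) 1)), Summable (fun n => (a n * f n x)^2)) ∧
          IntegrableOn (fun x => Real.sqrt (∑' n, (a n * f n x)^2)) (Set.Icc (0:ℝ) 1) ∧
          (∫ x in Set.Icc (0:ℝ) 1, Real.sqrt (∑' n, (a n * f n x)^2)) ≤ C * B := by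
  refine ⟨√3, by positivity, fun f a hmeas hsq _ _ hconv B hB => ?_⟩
  have hu (n : ℕ) : Integrable (fun x => a n * f n x) (volume.restrict (Icc (0 : ℝ) 1)) :=
    (((memLp_two_iff_integrable_sq (hmeas n).aestronglyMeasurable).2 (hsq n)).integrable
      one_le_two).const_mul (a n)
  have hsigned := fun (ε : ℕ → ℝ) (hε : ∀ n, ε n = 1 ∨ ε n = -1) N =>
    integral_abs_sum_range_le_of_unconditional hu hconv hB hε N
  have hB₀ : 0 ≤ B := by simpa using hsigned (fun _ => 1) (fun _ => Or.inl rfl) 0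
  exact integrable_sqrt_tsum_of_lintegral_sqrt_sum_range_le (fun n => by fun_prop)
    (fun n x => sq_nonneg _) (by positivity) fun N => lintegral_sqrt_sum_range_sq_le hu N
      fun t => hsigned (subsetSign t) (subsetSign_eq_one_or_eq_neg_one t) N
end
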